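/- arXiv:1202.0644 — 4 statements merged into one kernel-verified Lean document; each statement's English description precedes it below -/
import Mathlib

section
/- Let A be an n×k complex matrix (k ≤ n) with columns W₁,...,W_k, and for each i let H_i = span{W_j : j ≠ i}. Then the smallest singular value of A satisfies s_min(A) ≥ (1/√k) · min_{1≤i≤k} dist(W_i, H_i), where dist is the Euclidean distance from a vector to a subspace. -/
/-- Euclidean norm of a complex vector. -/
noncomputable def cEnorm {ι : Type*} [Fintype ι] (v : ι → ℂ) : ℝ :=
  Real.sqrt (∑ i, ‖v i‖ ^ 2)

/-- Smallest singular value of a (possibly rectangular) complex matrix: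
`min` over unit vectors `x` of `‖B x‖₂`. -/
noncomputable def smin {ι κ : Type*} [Fintype ι] [Fintype κ] (B : Matrix ι κ ℂ) : ℝ :=
  sInf {r | ∃ x : κ → ℂ, cEnorm x = 1 ∧ r = cEnorm (B.mulVec x)}

/-- Euclidean distance from a vector to a subspace. -/
noncomputable def distE {ι : Type*} [Fintype ι] (v : ι → ℂ)
    (H : Submodule ℂ (ι → ℂ)) : ℝ :=
  sInf {r | ∃ h ∈ H, r = cEnorm (v - h)}

/-!
If `‖x‖₂ = 1`, some coordinate has `|xᵢ| ≥ 1/√k`. Splitting off the `i`-th column,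
`A x = xᵢ • (Wᵢ + xᵢ⁻¹ ∑_{j ≠ i} xⱼ Wⱼ)`, and the second factor is `Wᵢ` minus a vector of `Hᵢ`,
so `‖A x‖₂ ≥ |xᵢ| dist(Wᵢ, Hᵢ) ≥ (1/√k) minᵢ dist(Wᵢ, Hᵢ)`.
-/

open Finset Matrix Submodule

lemma mulVec_eq_smul_add_sum_erase {m κ R : Type*} [CommSemiring R] [Fintype κ] [DecidableEq κ]
    (B : Matrix m κ R) (x : κ → R) (i : κ) :
    B *ᵥ x = x i • (fun r => B r i) + ∑ j ∈ univ.erase i, x j • fun r => B r j := by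
  rw [add_sum_erase _ (fun j => x j • fun r => B r j) (mem_univ i)]
  ext r
  simp [Matrix.mulVec, dotProduct, mul_comm]

section

variable {ι κ : Type*} [Fintype ι] [Fintype κ]

lemma cEnorm_eq_norm_toLp (v : ι → ℂ) :
    cEnorm v = ‖(WithLp.toLp 2 v : EuclideanSpace ℂ ι)‖ :=
  (EuclideanSpace.norm_eq _).symm

lemma cEnorm_nonneg (v : ι → ℂ) : 0 ≤ cEnorm v :=
  Real.sqrt_nonneg _

lemma cEnorm_smul (c : ℂ) (v : ι → ℂ) : cEnorm (c • v) = ‖c‖ * cEnorm v := by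
  rw [cEnorm_eq_norm_toLp, cEnorm_eq_norm_toLp, WithLp.toLp_smul, norm_smul]

lemma cEnorm_single [DecidableEq ι] (i : ι) (a : ℂ) : cEnorm (Pi.single i a) = ‖a‖ := by
  rw [cEnorm_eq_norm_toLp, PiLp.toLp_single, PiLp.norm_single]

lemma exists_cEnorm_le_sqrt_card_mul_norm [Nonempty ι] (x : ι → ℂ) :
    ∃ i, cEnorm x ≤ √(Fintype.card ι) * ‖x i‖ := by
  obtain ⟨i, hi⟩ := Finite.exists_max fun j => ‖x j‖
  refine ⟨i, ?_⟩
  rw [cEnorm, ← Real.sqrt_sq (norm_nonneg (x i)), ← Real.sqrt_mul (Nat.cast_nonneg _)]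
  gcongr
  calc ∑ j, ‖x j‖ ^ 2 ≤ ∑ _j : ι, ‖x i‖ ^ 2 := by gcongr with j; exact hi j
    _ = Fintype.card ι * ‖x i‖ ^ 2 := by rw [sum_const, card_univ, nsmul_eq_mul]

lemma distE_nonneg (v : ι → ℂ) (H : Submodule ℂ (ι → ℂ)) : 0 ≤ distE v H :=
  Real.sInf_nonneg <| by rintro _ ⟨h, -, rfl⟩; exact cEnorm_nonneg _

lemma distE_le_cEnorm_sub (v : ι → ℂ) {H : Submodule ℂ (ι → ℂ)} {h : ι → ℂ} (hh : h ∈ H) :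
    distE v H ≤ cEnorm (v - h) :=
  csInf_le ⟨0, by rintro _ ⟨g, -, rfl⟩; exact cEnorm_nonneg _⟩ ⟨h, hh, rfl⟩

def spanOtherCols (B : Matrix ι κ ℂ) (i : κ) : Submodule ℂ (ι → ℂ) :=
  span ℂ {w | ∃ j : κ, j ≠ i ∧ w = fun r => B r j}

lemma norm_mul_distE_le_cEnorm_mulVec (B : Matrix ι κ ℂ) (x : κ → ℂ) (i : κ) :
    ‖x i‖ * distE (fun r => B r i) (spanOtherCols B i) ≤ cEnorm (B *ᵥ x) := by
  classical
  rcases eq_or_ne (x i) 0 with hxi | hxi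
  · simpa [hxi] using cEnorm_nonneg _
  set s := ∑ j ∈ univ.erase i, x j • fun r => B r j
  have hs : -(x i)⁻¹ • s ∈ spanOtherCols B i :=
    smul_mem _ _ <| sum_mem fun j hj => smul_mem _ _ <| subset_span ⟨j, ne_of_mem_erase hj, rfl⟩
  have hBx : B *ᵥ x = x i • ((fun r => B r i) - -(x i)⁻¹ • s) := by
    rw [mulVec_eq_smul_add_sum_erase, neg_smul, sub_neg_eq_add, smul_add, smul_inv_smul₀ hxi]
  calc ‖x i‖ * distE (fun r => B r i) (spanOtherCols B i)
      ≤ ‖x i‖ * cEnorm ((fun r => B r i) - -(x i)⁻¹ • s) := by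
        gcongr; exact distE_le_cEnorm_sub _ hs
    _ = cEnorm (B *ᵥ x) := by rw [hBx, cEnorm_smul]

theorem inv_sqrt_card_mul_iInf_distE_le_smin [Nonempty κ] (B : Matrix ι κ ℂ) :
    1 / √(Fintype.card κ) * ⨅ i, distE (fun r => B r i) (spanOtherCols B i) ≤ smin B := by
  classical
  obtain ⟨i₀⟩ := ‹Nonempty κ›
  refine le_csInf ⟨_, Pi.single i₀ 1, by rw [cEnorm_single, norm_one], rfl⟩ ?_
  rintro _ ⟨x, hx, rfl⟩
  obtain ⟨i, hi⟩ := exists_cEnorm_le_sqrt_card_mul_norm x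
  have hcoord : 1 / √(Fintype.card κ) ≤ ‖x i‖ := by
    rw [div_le_iff₀' (by positivity)]; rwa [hx] at hi
  calc 1 / √(Fintype.card κ) * ⨅ i, distE (fun r => B r i) (spanOtherCols B i)
      ≤ ‖x i‖ * distE (fun r => B r i) (spanOtherCols B i) :=
        mul_le_mul hcoord (ciInf_le ⟨0, by rintro _ ⟨j, rfl⟩; exact distE_nonneg _ _⟩ i)
          (le_ciInf fun j => distE_nonneg _ _) (norm_nonneg _)
    _ ≤ cEnorm (B *ᵥ x) := norm_mul_distE_le_cEnorm_mulVec B x i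

end

theorem smin_ge_inv_sqrt_mul_min_dist_general {n k : ℕ} (hk : 0 < k)
    (A : Matrix (Fin n) (Fin k) ℂ) :
    (1 / Real.sqrt k) *
        (⨅ i : Fin k, distE (fun r => A r i)
          (Submodule.span ℂ {w | ∃ j : Fin k, j ≠ i ∧ w = fun r => A r j}))
      ≤ smin A := by
  have : Nonempty (Fin k) := ⟨⟨0, hk⟩⟩
  simpa only [Fintype.card_fin, spanOtherCols] using inv_sqrt_card_mul_iInf_distE_le_smin A

/-- For an `n × k` complex matrix `A` (`k ≤ n`) with columns `W₁, …, W_k`, the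
smallest singular value satisfies
`s_min(A) ≥ (1/√k) ⬝ min_i dist(W_i, span{W_j : j ≠ i})`. -/
theorem smin_ge_inv_sqrt_mul_min_dist {n k : ℕ} (hk : 0 < k) (hkn : k ≤ n)
    (A : Matrix (Fin n) (Fin k) ℂ) :
    (1 / Real.sqrt k) *
        (⨅ i : Fin k, distE (fun r => A r i)
          (Submodule.span ℂ {w | ∃ j : Fin k, j ≠ i ∧ w = fun r => A r j}))
      ≤ smin A :=
  smin_ge_inv_sqrt_mul_min_dist_general hk A
end

section
/- Let δ, ρ ∈ (0,1) and let x ∈ ℂⁿ be a unit vector with dist(x, Sparse(δ)) > ρ, where Sparse(δ) is the set of vectors supported on at most δn coordinates (i.e., x is (δ,ρ)-incompressible). Then there exists a subset π ⊆ {1,...,n} with |π| ≥ δn/2 such that for all i ∈ π, ρ/√n ≤ |x_i| ≤ √(2/(δn)). -/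
/-- Euclidean norm of a complex vector. -/
noncomputable def enorm {ι : Type*} [Fintype ι] (v : ι → ℂ) : ℝ :=
  Real.sqrt (∑ i, ‖v i‖ ^ 2)

/-- Euclidean distance from a vector to a set of vectors. -/
noncomputable def distSet {ι : Type*} [Fintype ι] (v : ι → ℂ)
    (S : Set (ι → ℂ)) : ℝ :=
  sInf {r | ∃ y ∈ S, r = _root_.enorm (v - y)}

/-- The set of vectors in `ℂⁿ` supported on at most `δ n` coordinates. -/
def sparse (n : ℕ) (δ : ℝ) : Set (Fin n → ℂ) :=
  {y | (Nat.card {i // y i ≠ 0} : ℝ) ≤ δ * n}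

/-! The coordinates of size at least `ρ/√n` cannot be fewer than `δn`: otherwise truncating
`x` to them gives a `δn`-sparse vector within distance `√n · ρ/√n = ρ` of `x`. By Markov's
inequality for `|x_i|²`, at most `δn/2` coordinates of a unit vector exceed `√(2/(δn))`.
The coordinates in the first set but not in the second are the required `π`. -/

open Finset

section

variable {ι : Type*} [Fintype ι]

theorem enorm_sq (v : ι → ℂ) : _root_.enorm v ^ 2 = ∑ i, ‖v i‖ ^ 2 :=
  Real.sq_sqrt (sum_nonneg fun _ _ => sq_nonneg _)

theorem enorm_le_of_norm_le {v : ι → ℂ} {c : ℝ} (hc : 0 ≤ c) (h : ∀ i, ‖v i‖ ≤ c) :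
    _root_.enorm v ≤ Real.sqrt (Fintype.card ι) * c := by
  have hsum : ∑ i, ‖v i‖ ^ 2 ≤ ∑ _i : ι, c ^ 2 :=
    sum_le_sum fun i _ => pow_le_pow_left₀ (norm_nonneg _) (h i) 2
  calc _root_.enorm v ≤ Real.sqrt (Fintype.card ι * c ^ 2) := by
        simpa [_root_.enorm] using Real.sqrt_le_sqrt hsum
    _ = Real.sqrt (Fintype.card ι) * c := by
        rw [Real.sqrt_mul (Nat.cast_nonneg _), Real.sqrt_sq hc]

theorem distSet_le_enorm_sub (v : ι → ℂ) {S : Set (ι → ℂ)} {y : ι → ℂ} (hy : y ∈ S) :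
    distSet v S ≤ _root_.enorm (v - y) :=
  csInf_le ⟨0, by rintro r ⟨z, -, rfl⟩; exact Real.sqrt_nonneg _⟩ ⟨y, hy, rfl⟩

theorem card_filter_lt_norm_mul_sq_le (v : ι → ℂ) {t : ℝ} (ht : 0 ≤ t) :
    (#{i | t < ‖v i‖} : ℝ) * t ^ 2 ≤ _root_.enorm v ^ 2 := by
  rw [enorm_sq]
  calc (#{i | t < ‖v i‖} : ℝ) * t ^ 2 ≤ ∑ i ∈ {i | t < ‖v i‖}, ‖v i‖ ^ 2 := by
        rw [← nsmul_eq_mul]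
        exact card_nsmul_le_sum _ _ _ fun i hi => pow_le_pow_left₀ ht (mem_filter.1 hi).2.le 2
    _ ≤ ∑ i, ‖v i‖ ^ 2 :=
        sum_le_sum_of_subset_of_nonneg (subset_univ _) fun i _ _ => sq_nonneg _

end

theorem indicator_mem_sparse {n : ℕ} {δ : ℝ} (x : Fin n → ℂ) {T : Finset (Fin n)}
    (hT : (#T : ℝ) ≤ δ * n) : (T : Set (Fin n)).indicator x ∈ sparse n δ := by
  have hsupp : #{i | (T : Set (Fin n)).indicator x i ≠ 0} ≤ #T :=
    card_le_card fun i hi => by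
      simp only [mem_filter, mem_univ, true_and, Set.indicator_apply_ne_zero] at hi
      exact mem_coe.1 hi.1
  simp only [sparse, Set.mem_ofPred_eq, Nat.card_eq_fintype_card, Fintype.card_subtype]
  exact le_trans (by exact_mod_cast hsupp) hT

theorem lt_card_filter_le_norm_of_lt_distSet {n : ℕ} (hn : 0 < n) {δ ρ : ℝ} (hρ : 0 ≤ ρ)
    {x : Fin n → ℂ} (hinc : ρ < distSet x (sparse n δ)) :
    δ * n < #{i | ρ / Real.sqrt n ≤ ‖x i‖} := by
  set T : Finset (Fin n) := {i | ρ / Real.sqrt n ≤ ‖x i‖}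
  by_contra! hT
  have hsmall : ∀ i, ‖(x - (T : Set (Fin n)).indicator x) i‖ ≤ ρ / Real.sqrt n := by
    intro i
    by_cases hi : i ∈ T
    · rw [Pi.sub_apply, Set.indicator_of_mem (mem_coe.2 hi), sub_self, norm_zero]
      positivity
    · rw [Pi.sub_apply, Set.indicator_of_notMem (mt mem_coe.1 hi), sub_zero]
      exact (not_le.1 fun h => hi (mem_filter.2 ⟨mem_univ i, h⟩)).le
  have hclose : _root_.enorm (x - (T : Set (Fin n)).indicator x) ≤ ρ := by
    have hsqrt : Real.sqrt n ≠ 0 := by positivity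
    simpa [mul_div_cancel₀ _ hsqrt] using enorm_le_of_norm_le (by positivity) hsmall
  linarith [distSet_le_enorm_sub x (indicator_mem_sparse x hT)]

theorem card_filter_lt_norm_le_of_enorm_eq_one {n : ℕ} {δ : ℝ} (hδn : 0 < δ * n)
    {x : Fin n → ℂ} (hx : _root_.enorm x = 1) :
    (#{i | Real.sqrt (2 / (δ * n)) < ‖x i‖} : ℝ) ≤ δ * n / 2 := by
  have h := card_filter_lt_norm_mul_sq_le x (Real.sqrt_nonneg (2 / (δ * n)))
  rw [hx, Real.sq_sqrt (by positivity), one_pow, ← mul_div_assoc, div_le_one hδn] at h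
  linarith

/-- If `x ∈ ℂⁿ` is a `(δ,ρ)`-incompressible unit vector (its distance to the set
of `δn`-sparse vectors exceeds `ρ`), then there is a set `π` of at least `δn/2`
coordinates on which `ρ/√n ≤ |x_i| ≤ √(2/(δn))`. -/
theorem incompressible_spread {n : ℕ} (δ ρ : ℝ)
    (hδ : δ ∈ Set.Ioo (0 : ℝ) 1) (hρ : ρ ∈ Set.Ioo (0 : ℝ) 1)
    (x : Fin n → ℂ) (hx : _root_.enorm x = 1) (hinc : ρ < distSet x (sparse n δ)) :
    ∃ π : Finset (Fin n), δ * n / 2 ≤ (π.card : ℝ) ∧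
      ∀ i ∈ π, ρ / Real.sqrt n ≤ ‖x i‖ ∧ ‖x i‖ ≤ Real.sqrt (2 / (δ * n)) := by
  have hn : 0 < n := Nat.pos_of_ne_zero (by rintro rfl; simp [_root_.enorm] at hx)
  set T : Finset (Fin n) := {i | ρ / Real.sqrt n ≤ ‖x i‖}
  set B : Finset (Fin n) := {i | Real.sqrt (2 / (δ * n)) < ‖x i‖}
  have hT : δ * n < #T := lt_card_filter_le_norm_of_lt_distSet hn hρ.1.le hinc
  have hB : (#B : ℝ) ≤ δ * n / 2 :=
    card_filter_lt_norm_le_of_enorm_eq_one (mul_pos hδ.1 (by exact_mod_cast hn)) hx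
  have hTB : (#T : ℝ) ≤ #(T \ B) + #B := by exact_mod_cast card_le_card_sdiff_add_card
  refine ⟨T \ B, by linarith, fun i hi => ?_⟩
  obtain ⟨hiT, hiB⟩ := mem_sdiff.1 hi
  simp only [T, B, mem_filter, mem_univ, true_and, not_lt] at hiT hiB
  exact ⟨hiT, hiB⟩
end

section
/- Fix z ∈ ℂ, t > 0, and a random variable G with values in ℂ. The equation 1 = E[(1 + t·h⁻¹)/(|G − z|² + (h + t)²)] has at most one solution h ∈ (0,∞): the map h ↦ E[(1 + t h⁻¹)/(|G−z|² + (h+t)²)] is strictly decreasing on (0,∞), tends to +∞ as h → 0⁺ and to 0 as h → ∞, hence there is a unique h > 0 satisfying it. -/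
/-!
Write `F h = (1 + t / h) · J ((h + t)²)` with `J c = E[(|G − z|² + c)⁻¹]`. On `c > 0`, `J` is
positive, antitone, at most `c⁻¹` and continuous (dominated convergence), so `F` is a product of
the strictly decreasing factor `1 + t / h` and a positive nonincreasing one. Near `0` the factor
`t / h` blows up while `J` stays above `J (4t²) > 0`, and at infinity `F h ≤ (1 + t / h)(h + t)⁻²`.
The intermediate value theorem then gives a solution of `F h = 1`, unique by strict monotonicity.
-/

open MeasureTheory Filter Set Topology

section IntegralInvAdd

variable {Ω : Type*} [MeasurableSpace Ω] {μ : Measure Ω} {X : Ω → ℝ}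

lemma integrable_inv_add [IsFiniteMeasure μ] (hX : AEMeasurable X μ) (hX0 : ∀ ω, 0 ≤ X ω) {c : ℝ}
    (hc : 0 < c) : Integrable (fun ω => (X ω + c)⁻¹) μ := by
  refine (integrable_const c⁻¹).mono' (hX.add_const c).inv.aestronglyMeasurable
    (ae_of_all _ fun ω => ?_)
  have hpos : 0 < X ω + c := by linarith [hX0 ω]
  rw [Real.norm_of_nonneg (inv_pos.2 hpos).le]
  exact inv_anti₀ hc (by linarith [hX0 ω])

lemma integral_inv_add_pos [IsFiniteMeasure μ] [NeZero μ] (hX : AEMeasurable X μ)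
    (hX0 : ∀ ω, 0 ≤ X ω) {c : ℝ} (hc : 0 < c) : 0 < ∫ ω, (X ω + c)⁻¹ ∂μ := by
  have hpos : ∀ ω, 0 < (X ω + c)⁻¹ := fun ω => inv_pos.2 (by linarith [hX0 ω])
  rw [integral_pos_iff_support_of_nonneg (fun ω => (hpos ω).le) (integrable_inv_add hX hX0 hc),
    Function.support_eq_univ fun ω => (hpos ω).ne', Measure.measure_univ_pos]
  exact NeZero.ne μ

lemma integral_inv_add_le_inv [IsProbabilityMeasure μ] (hX0 : ∀ ω, 0 ≤ X ω) {c : ℝ} (hc : 0 < c) :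
    ∫ ω, (X ω + c)⁻¹ ∂μ ≤ c⁻¹ := by
  calc ∫ ω, (X ω + c)⁻¹ ∂μ ≤ ∫ _, c⁻¹ ∂μ :=
        integral_mono_of_nonneg (ae_of_all _ fun ω => inv_nonneg.2 (by linarith [hX0 ω]))
          (integrable_const _) (ae_of_all _ fun ω => inv_anti₀ hc (by linarith [hX0 ω]))
    _ = c⁻¹ := by simp

lemma antitoneOn_integral_inv_add [IsFiniteMeasure μ] (hX : AEMeasurable X μ) (hX0 : ∀ ω, 0 ≤ X ω) :
    AntitoneOn (fun c => ∫ ω, (X ω + c)⁻¹ ∂μ) (Ioi 0) := fun a (ha : 0 < a) b _ hab =>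
  integral_mono_of_nonneg (ae_of_all _ fun ω => inv_nonneg.2 (by linarith [hX0 ω]))
    (integrable_inv_add hX hX0 ha)
    (ae_of_all _ fun ω => inv_anti₀ (by linarith [hX0 ω]) (by linarith))

lemma continuousOn_integral_inv_add [IsFiniteMeasure μ] (hX : AEMeasurable X μ)
    (hX0 : ∀ ω, 0 ≤ X ω) :
    ContinuousOn (fun c => ∫ ω, (X ω + c)⁻¹ ∂μ) (Ioi 0) := by
  intro c₀ (hc₀ : 0 < c₀)
  refine (continuousAt_of_dominated (F := fun c ω => (X ω + c)⁻¹) (bound := fun _ => (c₀ / 2)⁻¹)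
    (Eventually.of_forall fun c => (hX.add_const c).inv.aestronglyMeasurable) ?_
    (integrable_const _) (ae_of_all _ fun ω => ?_)).continuousWithinAt
  · filter_upwards [Ioi_mem_nhds (half_lt_self hc₀)] with c (hc : c₀ / 2 < c)
    refine ae_of_all _ fun ω => ?_
    have hpos : 0 < X ω + c := by linarith [hX0 ω]
    rw [Real.norm_of_nonneg (inv_pos.2 hpos).le]
    exact inv_anti₀ (half_pos hc₀) (by linarith [hX0 ω])
  · exact ContinuousAt.inv₀ (by fun_prop) (by linarith [hX0 ω] : 0 < X ω + c₀).ne'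

end IntegralInvAdd

lemma existsUnique_eq_of_strictAntiOn_Ioi {α β : Type*} [ConditionallyCompleteLinearOrder α]
    [TopologicalSpace α] [OrderTopology α] [DenselyOrdered α] [NoMaxOrder α]
    [LinearOrder β] [TopologicalSpace β] [OrderClosedTopology β] {F : α → β} {a : α} {ℓ c : β}
    (hanti : StrictAntiOn F (Ioi a)) (hcont : ContinuousOn F (Ioi a))
    (hleft : Tendsto F (𝓝[>] a) atTop) (hright : Tendsto F atTop (𝓝 ℓ)) (hc : ℓ < c) :
    ∃! x, x ∈ Ioi a ∧ F x = c := by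
  obtain ⟨x₀, hcx₀, hx₀⟩ := ((hleft.eventually_ge_atTop c).and self_mem_nhdsWithin).exists
  obtain ⟨x₁, hx₁c, hx₀x₁⟩ :=
    ((hright.eventually_lt_const hc).and (eventually_gt_atTop x₀)).exists
  have hsub : Icc x₀ x₁ ⊆ Ioi a := fun x hx => lt_of_lt_of_le hx₀ hx.1
  obtain ⟨x, hx, hFx⟩ :=
    intermediate_value_Icc' hx₀x₁.le (hcont.mono hsub) ⟨hx₁c.le, hcx₀⟩
  exact ⟨x, ⟨hsub hx, hFx⟩, fun y ⟨hy, hFy⟩ => hanti.injOn hy (hsub hx) (hFy.trans hFx.symm)⟩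

section SelfConsistency

variable {Ω : Type*} [MeasurableSpace Ω]

noncomputable def selfConsistencyMap (μ : Measure Ω) (X : Ω → ℝ) (t h : ℝ) : ℝ :=
  (1 + t / h) * ∫ ω, (X ω + (h + t) ^ 2)⁻¹ ∂μ

variable {μ : Measure Ω} {X : Ω → ℝ} {t : ℝ}

lemma strictAntiOn_selfConsistencyMap [IsFiniteMeasure μ] [NeZero μ] (hX : AEMeasurable X μ)
    (hX0 : ∀ ω, 0 ≤ X ω) (ht : 0 < t) : StrictAntiOn (selfConsistencyMap μ X t) (Ioi 0) := by
  intro a (ha : 0 < a) b (hb : 0 < b) hab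
  calc (1 + t / b) * ∫ ω, (X ω + (b + t) ^ 2)⁻¹ ∂μ
      < (1 + t / a) * ∫ ω, (X ω + (b + t) ^ 2)⁻¹ ∂μ := by
        have : t / b < t / a := div_lt_div_of_pos_left ht ha hab
        exact mul_lt_mul_of_pos_right (by linarith) (integral_inv_add_pos hX hX0 (by positivity))
    _ ≤ (1 + t / a) * ∫ ω, (X ω + (a + t) ^ 2)⁻¹ ∂μ := by
        refine mul_le_mul_of_nonneg_left ?_ (by positivity)
        exact antitoneOn_integral_inv_add hX hX0 (by positivity : (0 : ℝ) < (a + t) ^ 2)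
          (by positivity : (0 : ℝ) < (b + t) ^ 2) (by gcongr)

lemma continuousOn_selfConsistencyMap [IsFiniteMeasure μ] (hX : AEMeasurable X μ)
    (hX0 : ∀ ω, 0 ≤ X ω) (ht : 0 ≤ t) : ContinuousOn (selfConsistencyMap μ X t) (Ioi 0) := by
  have hmaps : MapsTo (fun h : ℝ => (h + t) ^ 2) (Ioi 0) (Ioi 0) := fun h (hh : 0 < h) =>
    show 0 < (h + t) ^ 2 by positivity
  refine ContinuousOn.mul (continuousOn_const.add (continuousOn_const.div continuousOn_id
    fun h (hh : 0 < h) => hh.ne')) ?_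
  exact (continuousOn_integral_inv_add hX hX0).comp (by fun_prop) hmaps

lemma tendsto_selfConsistencyMap_nhdsGT_zero [IsFiniteMeasure μ] [NeZero μ]
    (hX : AEMeasurable X μ) (hX0 : ∀ ω, 0 ≤ X ω) (ht : 0 < t) :
    Tendsto (selfConsistencyMap μ X t) (𝓝[>] 0) atTop := by
  set J := ∫ ω, (X ω + (t + t) ^ 2)⁻¹ ∂μ
  have hJ : 0 < J := integral_inv_add_pos hX hX0 (by positivity)
  refine tendsto_atTop_mono' _ ?_ (tendsto_inv_nhdsGT_zero.const_mul_atTop (mul_pos ht hJ))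
  filter_upwards [self_mem_nhdsWithin, nhdsWithin_le_nhds (gt_mem_nhds ht)]
    with h (hh : 0 < h) hht
  have hJh : J ≤ ∫ ω, (X ω + (h + t) ^ 2)⁻¹ ∂μ :=
    antitoneOn_integral_inv_add hX hX0 (by positivity : (0 : ℝ) < (h + t) ^ 2)
      (by positivity : (0 : ℝ) < (t + t) ^ 2) (by gcongr)
  calc t * J * h⁻¹ = t / h * J := by ring
    _ ≤ (1 + t / h) * ∫ ω, (X ω + (h + t) ^ 2)⁻¹ ∂μ :=
        mul_le_mul (by linarith) hJh hJ.le (by positivity)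

lemma tendsto_selfConsistencyMap_atTop [IsProbabilityMeasure μ] (hX0 : ∀ ω, 0 ≤ X ω)
    (ht : 0 ≤ t) : Tendsto (selfConsistencyMap μ X t) atTop (𝓝 0) := by
  have hbound : Tendsto (fun h : ℝ => (1 + t / h) * ((h + t) ^ 2)⁻¹) atTop (𝓝 0) := by
    have h1 : Tendsto (fun h : ℝ => 1 + t / h) atTop (𝓝 (1 + 0)) :=
      tendsto_const_nhds.add (tendsto_const_nhds.div_atTop tendsto_id)
    have h2 : Tendsto (fun h : ℝ => ((h + t) ^ 2)⁻¹) atTop (𝓝 0) :=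
      ((tendsto_pow_atTop two_ne_zero).comp
        (tendsto_atTop_add_const_right _ t tendsto_id)).inv_tendsto_atTop
    simpa using h1.mul h2
  refine tendsto_of_tendsto_of_tendsto_of_le_of_le' tendsto_const_nhds hbound ?_ ?_
  all_goals filter_upwards [eventually_gt_atTop 0] with h hh
  · exact mul_nonneg (by positivity)
      (integral_nonneg fun ω => inv_nonneg.2 (by linarith [hX0 ω, sq_nonneg (h + t)]))
  · exact mul_le_mul_of_nonneg_left (integral_inv_add_le_inv hX0 (by positivity)) (by positivity)

end SelfConsistency

/-- The map `h ↦ E[(1 + t h⁻¹)/(|G − z|² + (h + t)²)]` is strictly decreasing on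
`(0, ∞)`, tends to `+∞` as `h → 0⁺` and to `0` as `h → ∞`; hence there is a
unique `h > 0` with `E[(1 + t h⁻¹)/(|G − z|² + (h + t)²)] = 1`. -/
theorem fixed_point_unique {Ω : Type*} [MeasurableSpace Ω]
    (μ : Measure Ω) [IsProbabilityMeasure μ]
    (G : Ω → ℂ) (hG : Measurable G) (z : ℂ) (t : ℝ) (ht : 0 < t) :
    let F : ℝ → ℝ := fun h => ∫ ω, (1 + t / h) / (‖G ω - z‖ ^ 2 + (h + t) ^ 2) ∂μ
    StrictAntiOn F (Set.Ioi 0) ∧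
      Tendsto F (nhdsWithin 0 (Set.Ioi 0)) atTop ∧
      Tendsto F atTop (nhds 0) ∧
      ∃! h : ℝ, h ∈ Set.Ioi (0 : ℝ) ∧ F h = 1 := by
  intro F
  set X : Ω → ℝ := fun ω => ‖G ω - z‖ ^ 2
  have hX : AEMeasurable X μ := (((hG.sub_const z).norm).pow_const 2).aemeasurable
  have hX0 : ∀ ω, 0 ≤ X ω := fun ω => sq_nonneg _
  have hF : F = selfConsistencyMap μ X t := funext fun h => by
    simp only [F, X, selfConsistencyMap, div_eq_mul_inv, integral_const_mul]
  rw [hF]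
  have hanti := strictAntiOn_selfConsistencyMap hX hX0 ht
  have hleft := tendsto_selfConsistencyMap_nhdsGT_zero hX hX0 ht
  have hright := tendsto_selfConsistencyMap_atTop (μ := μ) hX0 ht.le
  exact ⟨hanti, hleft, hright, existsUnique_eq_of_strictAntiOn_Ioi hanti
    (continuousOn_selfConsistencyMap hX hX0 ht.le) hleft hright one_pos⟩
end

section
/- Let S be a complex random variable, t = 1/4, x₁,...,x_m ∈ ℂ with |x_k| ≥ 1, and let X₁,...,X_m be i.i.d. Bernoulli(p) random variables with pm ≤ 1/4 and m ≥ 4. Define p_k = max_{w∈ℂ} P(|Σ_{i=1}^k X_i x_i − w| ≤ t). Then p_m ≤ 1 − mp/4. -/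
/-!
If `‖w‖ ≤ 1/4`, the disc `B(w, 1/4)` contains no `x_i`, since `‖x_i‖ ≥ 1`; so the event is
disjoint from "exactly one `X_i` equals `1`", which has probability `m p (1 - p)^(m - 1)`.
Otherwise the disc misses `0`, and the event is disjoint from "all `X_i` vanish", of
probability `(1 - p)^m`. Bernoulli's inequality and `p m ≤ 1/4` bound both probabilities
below by `m p / 4`.
-/

open MeasureTheory ProbabilityTheory

lemma one_sub_mul_le_one_sub_pow {p : ℝ} (hp : p ≤ 2) (n : ℕ) :
    1 - n * p ≤ (1 - p) ^ n := by
  simpa [sub_eq_add_neg] using one_add_mul_le_pow (a := -p) (by linarith) n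

lemma mul_div_four_le_one_sub_pow {p : ℝ} {n : ℕ} (hp1 : p ≤ 1)
    (hpn : p * n ≤ 1 / 4) : n * p / 4 ≤ (1 - p) ^ n := by
  have h := one_sub_mul_le_one_sub_pow (by linarith) n
  nlinarith

lemma mul_div_four_le_mul_mul_one_sub_pow {p : ℝ} {n : ℕ} (hp : 0 ≤ p) (hp1 : p ≤ 1)
    (hpn : p * n ≤ 1 / 4) : n * p / 4 ≤ n * (p * (1 - p) ^ (n - 1)) := by
  have hn : ((n - 1 : ℕ) : ℝ) ≤ n := by exact_mod_cast n.sub_le 1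
  have h := one_sub_mul_le_one_sub_pow (by linarith) (n - 1)
  have h34 : 3 / 4 ≤ (1 - p) ^ (n - 1) := by nlinarith
  nlinarith [mul_nonneg (Nat.cast_nonneg n) hp]

section Probability

variable {Ω ι : Type*} [MeasurableSpace Ω] {μ : Measure Ω}

lemma measure_le_ofReal_one_sub_of_disjoint [IsProbabilityMeasure μ] {S A : Set Ω} {b : ℝ}
    (hA : MeasurableSet A) (hSA : Disjoint S A) (hb : 0 ≤ b) (hbA : ENNReal.ofReal b ≤ μ A) :
    μ S ≤ ENNReal.ofReal (1 - b) :=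
  calc μ S ≤ μ Aᶜ := measure_mono hSA.subset_compl_right
    _ = 1 - μ A := prob_compl_eq_one_sub hA
    _ ≤ 1 - ENNReal.ofReal b := tsub_le_tsub_left hbA 1
    _ = ENNReal.ofReal (1 - b) := by rw [ENNReal.ofReal_sub 1 hb, ENNReal.ofReal_one]

structure IsBernoulliFamily (μ : Measure Ω) (p : ℝ) (X : ι → Ω → ℝ) : Prop where
  measurable : ∀ i, Measurable (X i)
  eq_zero_or_eq_one : ∀ i ω, X i ω = 0 ∨ X i ω = 1
  measure_eq_one : ∀ i, μ {ω | X i ω = 1} = ENNReal.ofReal p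
  iIndepFun : iIndepFun X μ

namespace IsBernoulliFamily

variable {p : ℝ} {X : ι → Ω → ℝ}

lemma measure_eq_zero [IsProbabilityMeasure μ] (hX : IsBernoulliFamily μ p X) (hp : 0 ≤ p)
    (i : ι) :
    μ {ω | X i ω = 0} = ENNReal.ofReal (1 - p) := by
  have hcompl : {ω | X i ω = 0} = {ω | X i ω = 1}ᶜ := by
    ext ω
    rcases hX.eq_zero_or_eq_one i ω with h | h <;> simp [h]
  rw [hcompl, prob_compl_eq_one_sub (measurableSet_eq_fun (hX.measurable i) measurable_const),
    hX.measure_eq_one, ENNReal.ofReal_sub 1 hp, ENNReal.ofReal_one]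

variable [Fintype ι]

lemma measurableSet_forall_eq (hX : IsBernoulliFamily μ p X) (v : ι → ℝ) :
    MeasurableSet {ω | ∀ j, X j ω = v j} := by
  simpa only [Set.ofPred_forall] using
    MeasurableSet.iInter fun j => measurableSet_eq_fun (hX.measurable j) measurable_const

lemma measure_forall_eq (hX : IsBernoulliFamily μ p X) (v : ι → ℝ) :
    μ {ω | ∀ j, X j ω = v j} = ∏ j, μ {ω | X j ω = v j} := by
  simpa [Set.ofPred_forall, Set.preimage, Set.mem_singleton_iff] using
    hX.iIndepFun.measure_inter_preimage_eq_mul Finset.univ (sets := fun j => {v j})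
      (fun j _ => measurableSet_singleton _)

lemma measure_forall_eq_zero [IsProbabilityMeasure μ] (hX : IsBernoulliFamily μ p X)
    (hp : 0 ≤ p) (hp1 : p ≤ 1) :
    μ {ω | ∀ j, X j ω = 0} = ENNReal.ofReal ((1 - p) ^ Fintype.card ι) := by
  rw [hX.measure_forall_eq fun _ => 0]
  simp only [hX.measure_eq_zero hp, Finset.prod_const, Finset.card_univ]
  rw [ENNReal.ofReal_pow (by linarith)]

variable [DecidableEq ι]

lemma measure_forall_eq_single [IsProbabilityMeasure μ] (hX : IsBernoulliFamily μ p X)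
    (hp : 0 ≤ p) (hp1 : p ≤ 1) (i : ι) :
    μ {ω | ∀ j, X j ω = (Pi.single i 1 : ι → ℝ) j} =
      ENNReal.ofReal (p * (1 - p) ^ (Fintype.card ι - 1)) := by
  rw [hX.measure_forall_eq, ← Finset.mul_prod_erase _ _ (Finset.mem_univ i),
    Finset.prod_congr rfl fun j hj => by
      rw [Pi.single_eq_of_ne (Finset.ne_of_mem_erase hj), hX.measure_eq_zero hp]]
  rw [Pi.single_eq_same, hX.measure_eq_one, Finset.prod_const,
    Finset.card_erase_of_mem (Finset.mem_univ i), Finset.card_univ,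
    ← ENNReal.ofReal_pow (by linarith), ← ENNReal.ofReal_mul hp]

lemma measure_iUnion_forall_eq_single [IsProbabilityMeasure μ] (hX : IsBernoulliFamily μ p X)
    (hp : 0 ≤ p) (hp1 : p ≤ 1) :
    μ (⋃ i, {ω | ∀ j, X j ω = (Pi.single i 1 : ι → ℝ) j}) =
      ENNReal.ofReal (Fintype.card ι * (p * (1 - p) ^ (Fintype.card ι - 1))) := by
  have hdisj : Pairwise fun i i' => Disjoint {ω | ∀ j, X j ω = (Pi.single i 1 : ι → ℝ) j}
      {ω | ∀ j, X j ω = (Pi.single i' 1 : ι → ℝ) j} := by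
    intro i i' hii'
    refine Set.disjoint_left.mpr fun ω hi hi' => hii' ?_
    simpa [Pi.single_apply] using (hi i).symm.trans (hi' i)
  rw [measure_iUnion hdisj fun i => hX.measurableSet_forall_eq _, tsum_fintype]
  simp only [hX.measure_forall_eq_single hp hp1, Finset.sum_const, Finset.card_univ,
    nsmul_eq_mul]
  rw [ENNReal.ofReal_mul (Nat.cast_nonneg _), ENNReal.ofReal_natCast]

end IsBernoulliFamily

end Probability

theorem bernoulli_anticoncentration_general {Ω : Type*} [MeasurableSpace Ω]
    (μ : Measure Ω) [IsProbabilityMeasure μ]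
    {m : ℕ} (p : ℝ) (hp : 0 ≤ p) (hpm : p * m ≤ 1 / 4)
    (X : Fin m → Ω → ℝ) (hmeas : ∀ i, Measurable (X i))
    (hval : ∀ i ω, X i ω = 0 ∨ X i ω = 1)
    (hBer : ∀ i, μ {ω | X i ω = 1} = ENNReal.ofReal p)
    (hindep : iIndepFun X μ)
    (x : Fin m → ℂ) (hx : ∀ i, 1 ≤ ‖x i‖) :
    ∀ w : ℂ, μ {ω | ‖(∑ i, (X i ω : ℂ) * x i) - w‖ ≤ 1 / 4}
      ≤ ENNReal.ofReal (1 - m * p / 4) := by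
  intro w
  rcases Nat.eq_zero_or_pos m with rfl | hm
  · simpa using prob_le_one
  have hp1 : p ≤ 1 := by nlinarith [(Nat.one_le_cast (α := ℝ)).mpr hm]
  have hX : IsBernoulliFamily μ p X := ⟨hmeas, hval, hBer, hindep⟩
  by_cases hw : ‖w‖ ≤ 1 / 4
  · refine measure_le_ofReal_one_sub_of_disjoint
      (MeasurableSet.iUnion fun i => hX.measurableSet_forall_eq (Pi.single i 1)) ?_
      (by positivity) ?_
    · refine Set.disjoint_iUnion_right.mpr fun i => Set.disjoint_left.mpr fun ω hS hi => ?_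
      have hsum : ∑ j, (X j ω : ℂ) * x j = x i := by
        simp [hi.out, Pi.single_apply, apply_ite Complex.ofReal]
      have hS : ‖x i - w‖ ≤ 1 / 4 := hsum ▸ hS
      linarith [norm_sub_norm_le (x i) w, hx i]
    · rw [hX.measure_iUnion_forall_eq_single hp hp1, Fintype.card_fin]
      exact ENNReal.ofReal_le_ofReal (mul_div_four_le_mul_mul_one_sub_pow hp hp1 hpm)
  · refine measure_le_ofReal_one_sub_of_disjoint (hX.measurableSet_forall_eq fun _ => 0) ?_
      (by positivity) ?_
    · refine Set.disjoint_left.mpr fun ω hS h0 => hw ?_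
      have hsum : ∑ j, (X j ω : ℂ) * x j = 0 := by simp [h0.out]
      simpa [hsum] using hS
    · rw [hX.measure_forall_eq_zero hp hp1, Fintype.card_fin]
      exact ENNReal.ofReal_le_ofReal (mul_div_four_le_one_sub_pow hp1 hpm)

/-- Anti-concentration for Bernoulli sums: if `X₁, …, X_m` are i.i.d.
`Bernoulli(p)` with `p m ≤ 1/4`, `m ≥ 4`, and `x₁, …, x_m ∈ ℂ` satisfy
`|x_k| ≥ 1`, then for every `w ∈ ℂ`,
`P(|∑ X_i x_i − w| ≤ 1/4) ≤ 1 − m p / 4`. -/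
theorem bernoulli_anticoncentration {Ω : Type*} [MeasurableSpace Ω]
    (μ : Measure Ω) [IsProbabilityMeasure μ]
    {m : ℕ} (hm : 4 ≤ m) (p : ℝ) (hp : 0 ≤ p) (hpm : p * m ≤ 1 / 4)
    (X : Fin m → Ω → ℝ) (hmeas : ∀ i, Measurable (X i))
    (hval : ∀ i ω, X i ω = 0 ∨ X i ω = 1)
    (hBer : ∀ i, μ {ω | X i ω = 1} = ENNReal.ofReal p)
    (hindep : iIndepFun X μ)
    (x : Fin m → ℂ) (hx : ∀ i, 1 ≤ ‖x i‖) :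
    ∀ w : ℂ, μ {ω | ‖(∑ i, (X i ω : ℂ) * x i) - w‖ ≤ 1 / 4}
      ≤ ENNReal.ofReal (1 - m * p / 4) :=
  bernoulli_anticoncentration_general μ p hp hpm X hmeas hval hBer hindep x hx
end
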